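/- arXiv:2501.10816 — 2 statements merged into one kernel-verified Lean document; each statement's English description precedes it below -/
import Mathlib

section
/- Let $b>0$ and $m\geq 0$ satisfy $b^2>4m$. Then there exists a constant $C>0$, depending only on $b$ and $m$, such that for every real number $\Lambda$ with $\Lambda>\tfrac12\left(\tfrac{b^2}{4}-m\right)$, every twice continuously differentiable function $y:[0,\infty)\to\mathbb{C}$ satisfying $y''(t)+b\,y'(t)+(\Lambda+m)\,y(t)=0$ for all $t\geq 0$, and every $t>0$, one has $\Lambda\,|y(t)|^2\leq C\,e^{\left(-b+\sqrt{\frac12(b^2-4m)}\right)t}\left(\Lambda\,|y(0)|^2+|y'(0)|^2\right)$. -/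
/-!
Energy method. For a solution of `y'' + b y' + P y = 0` (here `P = Λ + m`) take the perturbed
energy `E = P‖y‖² + ‖y'‖² + ε⟪y', y⟫`. With `s = √(b(b - ε))` and `σ = b - s`, along solutions
`σE + E'` is minus the quadratic form `(s + b - ε)‖y'‖² + (s - b + ε)P‖y‖² + εs⟪y', y⟫`, which is
nonnegative by Cauchy–Schwarz as soon as `εb ≤ 4P`; hence `e^{σt}E(t)` is nonincreasing.
The choice `ε = (b² + 4m)/(2b)` gives `b(b - ε) = (b² - 4m)/2`, the rate of the statement, and
turns `εb ≤ 4P` into `Λ ≥ (b²/4 - m)/2`. Finally `E ≥ (P - ε²/4)‖y‖² ≥ (ε/b)Λ‖y‖²`, while `E(0)`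
is bounded by a multiple of `Λ‖y(0)‖² + ‖y'(0)‖²`.
-/

open Set Real
open scoped RealInnerProductSpace

theorem add_add_mul_nonneg_of_sq_le {a c e x y w : ℝ} (ha : 0 ≤ a) (hc : 0 ≤ c)
    (hw : |w| ≤ x * y) (he : e ^ 2 ≤ 4 * a * c) :
    0 ≤ a * x ^ 2 + c * y ^ 2 + e * w := by
  have hS : 0 ≤ a * x ^ 2 + c * y ^ 2 := by positivity
  have hw2 : w ^ 2 ≤ (x * y) ^ 2 := sq_le_sq' (abs_le.1 hw).1 (abs_le.1 hw).2
  have : (e * w) ^ 2 ≤ (a * x ^ 2 + c * y ^ 2) ^ 2 := by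
    nlinarith [sq_nonneg (a * x ^ 2 - c * y ^ 2), mul_le_mul he hw2 (sq_nonneg w) (by positivity)]
  linarith [(abs_le_of_sq_le_sq' this hS).1]

theorem DifferentiableOn.hasDerivAt_derivWithin_Ici {F : Type*} [NormedAddCommGroup F]
    [NormedSpace ℝ F] {f : ℝ → F} {a t : ℝ} (hf : DifferentiableOn ℝ f (Ici a)) (ht : a < t) :
    HasDerivAt f (derivWithin f (Ici a) t) t := by
  rw [derivWithin_of_mem_nhds (Ici_mem_nhds ht)]
  exact ((hf t ht.le).differentiableAt (Ici_mem_nhds ht)).hasDerivAt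

section DampedOscillator

variable {E : Type*} [NormedAddCommGroup E] [InnerProductSpace ℝ E]

def dampedEnergy (P ε : ℝ) (u v : E) : ℝ := P * ‖u‖ ^ 2 + ‖v‖ ^ 2 + ε * ⟪v, u⟫

theorem le_dampedEnergy (P ε : ℝ) (u v : E) :
    (P - ε ^ 2 / 4) * ‖u‖ ^ 2 ≤ dampedEnergy P ε u v := by
  have h := norm_add_sq_real v ((ε / 2) • u)
  rw [real_inner_smul_right, norm_smul, mul_pow, Real.norm_eq_abs, sq_abs] at h
  unfold dampedEnergy
  nlinarith [sq_nonneg ‖v + (ε / 2) • u‖]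

theorem dampedEnergy_le {ε : ℝ} (hε : 0 ≤ ε) (P : ℝ) (u v : E) :
    dampedEnergy P ε u v ≤ (P + ε / 2) * ‖u‖ ^ 2 + (1 + ε / 2) * ‖v‖ ^ 2 := by
  unfold dampedEnergy
  nlinarith [real_inner_le_norm v u, sq_nonneg (‖u‖ - ‖v‖)]

theorem hasDerivAt_dampedEnergy {b P ε t : ℝ} {y y' : ℝ → E} (hy : HasDerivAt y (y' t) t)
    (hy' : HasDerivAt y' (-(b • y' t) - P • y t) t) :
    HasDerivAt (fun t ↦ dampedEnergy P ε (y t) (y' t))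
      ((ε - 2 * b) * ‖y' t‖ ^ 2 - ε * b * ⟪y' t, y t⟫ - ε * P * ‖y t‖ ^ 2) t := by
  refine (((hy.norm_sq.const_mul P).add hy'.norm_sq).add
    ((hy'.inner ℝ hy).const_mul ε)).congr_deriv ?_
  simp only [inner_sub_left, inner_sub_right, inner_neg_left, inner_neg_right,
    real_inner_smul_left, real_inner_smul_right, real_inner_self_eq_norm_sq,
    real_inner_comm (y t) (y' t)]
  ring

theorem dampedEnergy_dissipation {b ε P : ℝ} (hε : 0 ≤ ε) (hεb : ε ≤ b) (hP : ε * b ≤ 4 * P)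
    (u v : E) :
    (b - √(b * (b - ε))) * dampedEnergy P ε u v
      + ((ε - 2 * b) * ‖v‖ ^ 2 - ε * b * ⟪v, u⟫ - ε * P * ‖u‖ ^ 2) ≤ 0 := by
  set s := √(b * (b - ε))
  have hs : s ^ 2 = b * (b - ε) := sq_sqrt (mul_nonneg (hε.trans hεb) (sub_nonneg.2 hεb))
  have hs' : b - ε ≤ s := le_sqrt_of_sq_le (by nlinarith)
  have hkey : (ε * s) ^ 2 ≤ 4 * (s + (b - ε)) * ((s - (b - ε)) * P) := by
    calc (ε * s) ^ 2 = ε * (b - ε) * (ε * b) := by rw [mul_pow, hs]; ring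
      _ ≤ ε * (b - ε) * (4 * P) := by gcongr
      _ = 4 * (s + (b - ε)) * ((s - (b - ε)) * P) := by linear_combination (-4 * P) * hs
  have := add_add_mul_nonneg_of_sq_le (by linarith) (mul_nonneg (by linarith) (by nlinarith))
    (abs_real_inner_le_norm v u) hkey
  unfold dampedEnergy
  linarith

variable {b ε P : ℝ} {y y' : ℝ → E}

theorem antitoneOn_exp_mul_dampedEnergy (hε : 0 ≤ ε) (hεb : ε ≤ b) (hP : ε * b ≤ 4 * P)
    (hyc : ContinuousOn y (Ici 0)) (hy'c : ContinuousOn y' (Ici 0))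
    (hy : ∀ t > 0, HasDerivAt y (y' t) t)
    (hy' : ∀ t > 0, HasDerivAt y' (-(b • y' t) - P • y t) t) :
    AntitoneOn (fun t ↦ exp ((b - √(b * (b - ε))) * t) * dampedEnergy P ε (y t) (y' t))
      (Ici 0) := by
  set σ := b - √(b * (b - ε))
  have hderiv : ∀ t > 0, HasDerivAt (fun t ↦ exp (σ * t) * dampedEnergy P ε (y t) (y' t))
      (exp (σ * t) * (σ * dampedEnergy P ε (y t) (y' t)
        + ((ε - 2 * b) * ‖y' t‖ ^ 2 - ε * b * ⟪y' t, y t⟫ - ε * P * ‖y t‖ ^ 2))) t :=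
    fun t ht ↦ ((((hasDerivAt_id t).const_mul σ).exp).mul
      (hasDerivAt_dampedEnergy (hy t ht) (hy' t ht))).congr_deriv (by simp only [id]; ring)
  refine antitoneOn_of_deriv_nonpos (convex_Ici 0) ?_ ?_ ?_
  · unfold dampedEnergy
    fun_prop
  · rw [interior_Ici]
    exact fun t ht ↦ (hderiv t ht).differentiableAt.differentiableWithinAt
  · rw [interior_Ici]
    intro t ht
    rw [(hderiv t ht).deriv]
    exact mul_nonpos_of_nonneg_of_nonpos (exp_nonneg _)
      (dampedEnergy_dissipation hε hεb hP (y t) (y' t))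

theorem norm_sq_le_of_dampedEnergy (hε : 0 ≤ ε) (hεb : ε ≤ b) (hP : ε * b ≤ 4 * P)
    (hyc : ContinuousOn y (Ici 0)) (hy'c : ContinuousOn y' (Ici 0))
    (hy : ∀ t > 0, HasDerivAt y (y' t) t)
    (hy' : ∀ t > 0, HasDerivAt y' (-(b • y' t) - P • y t) t) {t : ℝ} (ht : 0 ≤ t) :
    (P - ε ^ 2 / 4) * ‖y t‖ ^ 2 ≤ exp ((-b + √(b * (b - ε))) * t) *
      ((P + ε / 2) * ‖y 0‖ ^ 2 + (1 + ε / 2) * ‖y' 0‖ ^ 2) := by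
  have hdecay := antitoneOn_exp_mul_dampedEnergy hε hεb hP hyc hy'c hy hy' self_mem_Ici ht ht
  simp only [mul_zero, exp_zero, one_mul] at hdecay
  calc (P - ε ^ 2 / 4) * ‖y t‖ ^ 2 ≤ dampedEnergy P ε (y t) (y' t) := le_dampedEnergy _ _ _ _
    _ = exp ((-b + √(b * (b - ε))) * t) *
          (exp ((b - √(b * (b - ε))) * t) * dampedEnergy P ε (y t) (y' t)) := by
        rw [← mul_assoc, ← exp_add]; ring_nf; rw [exp_zero, one_mul]
    _ ≤ exp ((-b + √(b * (b - ε))) * t) * dampedEnergy P ε (y 0) (y' 0) := by gcongr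
    _ ≤ _ := by gcongr; exact dampedEnergy_le hε _ _ _

end DampedOscillator

theorem hasDerivAt_derivWithin_of_ode {b P t : ℝ} {y : ℝ → ℂ} (hy : ContDiffOn ℝ 2 y (Ici 0))
    (hode : ∀ t ∈ Ici (0 : ℝ), derivWithin (derivWithin y (Ici 0)) (Ici 0) t
      + (b : ℂ) * derivWithin y (Ici 0) t + (P : ℂ) * y t = 0) (ht : 0 < t) :
    HasDerivAt (derivWithin y (Ici 0)) (-(b • derivWithin y (Ici 0) t) - P • y t) t := by
  have hy' : ContDiffOn ℝ 1 (derivWithin y (Ici 0)) (Ici 0) :=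
    hy.derivWithin (uniqueDiffOn_Ici 0) (by norm_num)
  refine ((hy'.differentiableOn one_ne_zero).hasDerivAt_derivWithin_Ici ht).congr_deriv ?_
  rw [Complex.real_smul, Complex.real_smul]
  linear_combination hode t ht.le

theorem ContDiffOn.norm_sq_le_of_ode {b ε P t : ℝ} {y : ℝ → ℂ} (hy : ContDiffOn ℝ 2 y (Ici 0))
    (hode : ∀ t ∈ Ici (0 : ℝ), derivWithin (derivWithin y (Ici 0)) (Ici 0) t
      + (b : ℂ) * derivWithin y (Ici 0) t + (P : ℂ) * y t = 0)
    (hε : 0 ≤ ε) (hεb : ε ≤ b) (hP : ε * b ≤ 4 * P) (ht : 0 ≤ t) :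
    (P - ε ^ 2 / 4) * ‖y t‖ ^ 2 ≤ Real.exp ((-b + √(b * (b - ε))) * t) *
      ((P + ε / 2) * ‖y 0‖ ^ 2 + (1 + ε / 2) * ‖derivWithin y (Ici 0) 0‖ ^ 2) :=
  norm_sq_le_of_dampedEnergy hε hεb hP hy.continuousOn
    (hy.continuousOn_derivWithin (uniqueDiffOn_Ici 0) (by norm_num))
    (fun _ ht ↦ (hy.differentiableOn two_ne_zero).hasDerivAt_derivWithin_Ici ht)
    (fun _ ht ↦ hasDerivAt_derivWithin_of_ode hy hode ht) ht

theorem add_mul_add_mul_le_mul {Λ₀ Λ d e X V : ℝ} (hΛ₀ : 0 < Λ₀) (hΛ : Λ₀ ≤ Λ) (hd : 0 ≤ d)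
    (he : 0 ≤ e) (hX : 0 ≤ X) (hV : 0 ≤ V) :
    (Λ + d) * X + (1 + e) * V ≤ (1 + e + d / Λ₀) * (Λ * X + V) := by
  have hd' : d ≤ d / Λ₀ * Λ := by
    rw [div_mul_eq_mul_div, le_div_iff₀ hΛ₀]; gcongr
  have hΛd : Λ + d ≤ (1 + e + d / Λ₀) * Λ := by nlinarith
  have he' : 1 + e ≤ 1 + e + d / Λ₀ := le_add_of_nonneg_right (by positivity)
  calc _ ≤ (1 + e + d / Λ₀) * Λ * X + (1 + e + d / Λ₀) * V := by gcongr
    _ = _ := by ring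

/-- Large-frequency estimate for the homogeneous-Sobolev-weighted quantity: for
`Λ > (b²/4 - m)/2` and any C² solution `y` of `y'' + b y' + (Λ + m) y = 0` on `[0,∞)`,
one has `Λ|y(t)|² ≤ C e^{(-b+√(½(b²-4m)))t} (Λ|y(0)|² + |y'(0)|²)` with `C = C(b,m)`. -/
theorem stmt_6 (b m : ℝ) (hb : 0 < b) (hm : 0 ≤ m) (hbm : 4 * m < b ^ 2) :
    ∃ C : ℝ, 0 < C ∧ ∀ Λ : ℝ, (b ^ 2 / 4 - m) / 2 < Λ →
      ∀ y : ℝ → ℂ, ContDiffOn ℝ 2 y (Set.Ici 0) →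
      (∀ t ∈ Set.Ici (0 : ℝ),
        derivWithin (derivWithin y (Set.Ici 0)) (Set.Ici 0) t
          + (b : ℂ) * derivWithin y (Set.Ici 0) t
          + ((Λ : ℂ) + (m : ℂ)) * y t = 0) →
      ∀ t : ℝ, 0 < t →
        Λ * ‖y t‖ ^ 2 ≤
          C * Real.exp ((-b + Real.sqrt ((b ^ 2 - 4 * m) / 2)) * t) *
            (Λ * ‖y 0‖ ^ 2
              + ‖derivWithin y (Set.Ici 0) 0‖ ^ 2) := by
  obtain ⟨ε, hε⟩ : ∃ ε, ε * (2 * b) = b ^ 2 + 4 * m := ⟨_, div_mul_cancel₀ _ (by positivity)⟩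
  have hε0 : 0 < ε := by nlinarith
  have hεb : ε < b := by nlinarith
  have hrate : b * (b - ε) = (b ^ 2 - 4 * m) / 2 := by linear_combination -hε / 2
  have hΛ₀ : 0 < (b ^ 2 / 4 - m) / 2 := by linarith
  set K := 1 + ε / 2 + (m + ε / 2) / ((b ^ 2 / 4 - m) / 2) with hK
  refine ⟨b / ε * K, by positivity, fun Λ hΛ y hy hode t ht ↦ ?_⟩
  have hdecay := hy.norm_sq_le_of_ode (P := Λ + m) (by push_cast; exact hode) hε0.le hεb.le
    (by nlinarith) ht.le
  rw [hrate] at hdecay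
  have hlow : ε / b * Λ ≤ Λ + m - ε ^ 2 / 4 := by
    rw [div_mul_eq_mul_div, div_le_iff₀ hb]
    nlinarith [mul_le_mul_of_nonneg_left hΛ.le (sub_nonneg.2 hεb.le)]
  have hup := add_mul_add_mul_le_mul (d := m + ε / 2) (e := ε / 2) hΛ₀ hΛ.le
    (by positivity) (by positivity) (sq_nonneg ‖y 0‖) (sq_nonneg ‖derivWithin y (Ici 0) 0‖)
  rw [← hK] at hup
  calc Λ * ‖y t‖ ^ 2 = b / ε * (ε / b * Λ * ‖y t‖ ^ 2) := by field_simp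
    _ ≤ b / ε * ((Λ + m - ε ^ 2 / 4) * ‖y t‖ ^ 2) := by gcongr
    _ ≤ b / ε * (exp ((-b + √((b ^ 2 - 4 * m) / 2)) * t) *
          (K * (Λ * ‖y 0‖ ^ 2 + ‖derivWithin y (Ici 0) 0‖ ^ 2))) := by
        gcongr b / ε * ?_
        exact hdecay.trans (by gcongr; linarith)
    _ = _ := by ring
end

section
/- Let $b>0$ and $m\geq 0$ satisfy $b^2>4m$. Then there exists a constant $C>0$, depending only on $b$ and $m$, such that for every real number $\Lambda>0$, every twice continuously differentiable function $y:[0,\infty)\to\mathbb{C}$ satisfying $y''(t)+b\,y'(t)+(\Lambda+m)\,y(t)=0$ for all $t\geq 0$, and every $t>0$, one has $\Lambda\,|y(t)|^2\leq C\,e^{\left(-b+\sqrt{b^2-4m}\right)t}\left(\Lambda\,|y(0)|^2+|y'(0)|^2\right)$. -/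
open Set
open scoped Complex Real

/-!
Write the characteristic roots as `r₁,₂ = (-b ± d) / 2` with `d² = b² - 4(Λ + m)` and `Re d ≥ 0`,
so that `Re r₂ ≤ Re r₁ ≤ (-b + s) / 2` where `s = √(b² - 4m)`, and `√Λ, |r₁|, |r₂| ≤ (b + |d|) / 2`.
Each `y' - rᵢ y` solves a first-order equation, hence equals `e^{r_{3-i} t} (y'(0) - rᵢ y(0))`.
If `|d| ≥ s / 2`, subtracting the two identities gives `d y(t)` and the factor `(b + |d|) / |d|` is
bounded. If `|d| < s / 2`, the mean value inequality for `e^{-r₂ t} y` loses a factor `t`, which is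
absorbed by the extra decay `Re r₁ ≤ (-b + s) / 2 - s / 4`.
-/

theorem hasDerivAt_cexp_mul_ofReal (r : ℂ) (u : ℝ) :
    HasDerivAt (fun v : ℝ => cexp (r * v)) (r * cexp (r * u)) u := by
  simpa [mul_comm] using (((hasDerivAt_id u).ofReal_comp).const_mul r).cexp

theorem norm_cexp_mul_ofReal (r : ℂ) (u : ℝ) : ‖cexp (r * u)‖ = rexp (r.re * u) := by
  simp [Complex.norm_exp]

theorem eq_cexp_mul_of_hasDerivWithinAt_Ici {f : ℝ → ℂ} {r : ℂ}
    (hf : ∀ u ∈ Ici (0 : ℝ), HasDerivWithinAt f (r * f u) (Ici 0) u) {t : ℝ} (ht : 0 ≤ t) :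
    f t = cexp (r * t) * f 0 := by
  have hg : ∀ u ∈ Ici (0 : ℝ), HasDerivWithinAt (fun v : ℝ => cexp (-r * v) * f v) 0 (Ici 0) u := by
    intro u hu
    exact (((hasDerivAt_cexp_mul_ofReal (-r) u).hasDerivWithinAt).mul (hf u hu)).congr_deriv
      (by ring)
  have hconst := constant_of_has_deriv_right_zero (a := 0) (b := t)
    (fun u hu => (hg u hu.1).continuousWithinAt.mono Icc_subset_Ici_self)
    (fun u hu => (hg u hu.1).mono (Ici_subset_Ici.2 hu.1)) t ⟨ht, le_rfl⟩
  have hinv : cexp (r * t) * cexp (-r * t) = 1 := by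
    rw [← Complex.exp_add]; simp
  simp only [Complex.ofReal_zero, mul_zero, Complex.exp_zero, one_mul] at hconst
  linear_combination cexp (r * t) * hconst - f t * hinv

theorem exists_sq_eq_ofReal_re_le {D s : ℝ} (hs : 0 ≤ s) (hD : D ≤ s ^ 2) :
    ∃ d : ℂ, d ^ 2 = D ∧ 0 ≤ d.re ∧ d.re ≤ s := by
  rcases le_or_gt 0 D with hD0 | hD0
  · refine ⟨(√D : ℝ), by rw [← Complex.ofReal_pow, Real.sq_sqrt hD0], by simp, ?_⟩
    simpa using Real.sqrt_le_sqrt hD |>.trans_eq (Real.sqrt_sq hs)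
  · refine ⟨(√(-D) : ℝ) * Complex.I, ?_, by simp, by simp [hs]⟩
    rw [mul_pow, Complex.I_sq, ← Complex.ofReal_pow, Real.sq_sqrt (by linarith)]
    push_cast; ring

theorem exists_roots_of_sq_sub_le {b c s : ℝ} (hb : 0 ≤ b) (hs : 0 ≤ s)
    (hc : b ^ 2 - 4 * c ≤ s ^ 2) :
    ∃ r₁ r₂ : ℂ, r₁ + r₂ = -b ∧ r₁ * r₂ = c ∧ r₂.re ≤ r₁.re ∧ r₁.re ≤ (-b + s) / 2 ∧
      r₁.re ≤ (-b + ‖r₁ - r₂‖) / 2 ∧ ‖r₁‖ ≤ (b + ‖r₁ - r₂‖) / 2 ∧ ‖r₂‖ ≤ (b + ‖r₁ - r₂‖) / 2 := by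
  obtain ⟨d, hd2, hd0, hds⟩ := exists_sq_eq_ofReal_re_le hs hc
  have hnorm : ∀ ε : ℂ, ‖(-(b : ℂ) + ε) / 2‖ ≤ (b + ‖ε‖) / 2 := fun ε => by
    rw [norm_div, Complex.norm_ofNat]
    gcongr
    exact (norm_add_le _ _).trans_eq (by simp [abs_of_nonneg hb])
  have hsub : (-(b : ℂ) + d) / 2 - (-b + -d) / 2 = d := by ring
  have hre₁ : ((-(b : ℂ) + d) / 2).re = (-b + d.re) / 2 := by simp
  have hre₂ : ((-(b : ℂ) + -d) / 2).re = (-b - d.re) / 2 := by simp [sub_eq_add_neg]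
  refine ⟨(-b + d) / 2, (-b + -d) / 2, by ring, ?_, ?_, ?_, ?_, ?_, ?_⟩
  · push_cast at hd2; linear_combination (-1 / 4 : ℂ) * hd2
  · rw [hre₁, hre₂]; linarith
  · rw [hre₁]; linarith
  · rw [hre₁, hsub]; linarith [Complex.re_le_norm d]
  · rw [hsub]; exact hnorm d
  · rw [hsub, ← norm_neg d]; exact hnorm (-d)

theorem mul_norm_sub_mul_le {L ρ : ℝ} {r a c : ℂ} (hL : 0 ≤ L) (hLρ : L ≤ ρ) (hr : ‖r‖ ≤ ρ) :
    L * ‖c - r * a‖ ≤ ρ * (L * ‖a‖ + ‖c‖) := by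
  have h : ‖c - r * a‖ ≤ ‖c‖ + ρ * ‖a‖ :=
    (norm_sub_le _ _).trans (by rw [norm_mul]; gcongr)
  nlinarith [mul_le_mul_of_nonneg_left h hL, mul_le_mul_of_nonneg_right hLρ (norm_nonneg c)]

section FactoredODE

variable {y : ℝ → ℂ} {r₁ r₂ : ℂ}

local notation "y'" => derivWithin y (Ici 0)

theorem derivWithin_sub_mul_eq_cexp (hy : ContDiffOn ℝ 2 y (Ici 0))
    (hode : ∀ u ∈ Ici (0 : ℝ),
      derivWithin y' (Ici 0) u - (r₁ + r₂) * y' u + r₁ * r₂ * y u = 0)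
    {t : ℝ} (ht : 0 ≤ t) :
    y' t - r₂ * y t = cexp (r₁ * t) * (y' 0 - r₂ * y 0) := by
  have hy₁ : DifferentiableOn ℝ y (Ici 0) := hy.differentiableOn two_ne_zero
  have hy₂ : DifferentiableOn ℝ y' (Ici 0) :=
    (hy.derivWithin (uniqueDiffOn_Ici 0) (m := 1) (by norm_num)).differentiableOn one_ne_zero
  refine eq_cexp_mul_of_hasDerivWithinAt_Ici (f := fun v => y' v - r₂ * y v) (fun u hu => ?_) ht
  exact ((hy₂ u hu).hasDerivWithinAt.sub ((hy₁ u hu).hasDerivWithinAt.const_mul r₂)).congr_deriv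
    (by linear_combination hode u hu)

theorem sub_mul_eq_cexp_sub_cexp (hy : ContDiffOn ℝ 2 y (Ici 0))
    (hode : ∀ u ∈ Ici (0 : ℝ),
      derivWithin y' (Ici 0) u - (r₁ + r₂) * y' u + r₁ * r₂ * y u = 0)
    {t : ℝ} (ht : 0 ≤ t) :
    (r₁ - r₂) * y t =
      cexp (r₁ * t) * (y' 0 - r₂ * y 0) - cexp (r₂ * t) * (y' 0 - r₁ * y 0) := by
  have hode' : ∀ u ∈ Ici (0 : ℝ),
      derivWithin y' (Ici 0) u - (r₂ + r₁) * y' u + r₂ * r₁ * y u = 0 := by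
    intro u hu; linear_combination hode u hu
  linear_combination derivWithin_sub_mul_eq_cexp hy hode ht
    - derivWithin_sub_mul_eq_cexp hy hode' ht

theorem norm_sub_cexp_mul_le (hy : ContDiffOn ℝ 2 y (Ici 0))
    (hode : ∀ u ∈ Ici (0 : ℝ),
      derivWithin y' (Ici 0) u - (r₁ + r₂) * y' u + r₁ * r₂ * y u = 0)
    (hre : r₂.re ≤ r₁.re) {t : ℝ} (ht : 0 ≤ t) :
    ‖y t - cexp (r₂ * t) * y 0‖ ≤ t * rexp (r₁.re * t) * ‖y' 0 - r₂ * y 0‖ := by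
  have hy₁ : DifferentiableOn ℝ y (Ici 0) := hy.differentiableOn two_ne_zero
  set g : ℝ → ℂ := fun v => cexp (-r₂ * v) * y v
  have hg : ∀ u ∈ Icc 0 t, HasDerivWithinAt g
      (cexp ((r₁ - r₂) * u) * (y' 0 - r₂ * y 0)) (Icc 0 t) u := by
    intro u hu
    have hw := derivWithin_sub_mul_eq_cexp hy hode hu.1
    have hexp : cexp ((r₁ - r₂) * u) = cexp (-r₂ * u) * cexp (r₁ * u) := by
      rw [← Complex.exp_add]; ring_nf
    refine ((((hasDerivAt_cexp_mul_ofReal (-r₂) u).hasDerivWithinAt).mul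
      ((hy₁ u hu.1).hasDerivWithinAt)).mono Icc_subset_Ici_self).congr_deriv ?_
    linear_combination cexp (-r₂ * u) * hw - (y' 0 - r₂ * y 0) * hexp
  have hbound : ∀ u ∈ Ico 0 t, ‖cexp ((r₁ - r₂) * u) * (y' 0 - r₂ * y 0)‖ ≤
      rexp ((r₁.re - r₂.re) * t) * ‖y' 0 - r₂ * y 0‖ := by
    intro u hu
    rw [norm_mul, norm_cexp_mul_ofReal, Complex.sub_re]
    gcongr
    exact hu.2.le
  have hmvt := norm_image_sub_le_of_norm_deriv_le_segment' hg hbound t ⟨ht, le_rfl⟩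
  have hyt : y t = cexp (r₂ * t) * g t := by
    simp [g, ← mul_assoc, ← Complex.exp_add]
  have hg0 : g 0 = y 0 := by simp [g]
  calc ‖y t - cexp (r₂ * t) * y 0‖ = rexp (r₂.re * t) * ‖g t - g 0‖ := by
        rw [hyt, hg0, ← mul_sub, norm_mul, norm_cexp_mul_ofReal]
    _ ≤ rexp (r₂.re * t) * (rexp ((r₁.re - r₂.re) * t) * ‖y' 0 - r₂ * y 0‖ * (t - 0)) := by
        gcongr
    _ = t * rexp (r₁.re * t) * ‖y' 0 - r₂ * y 0‖ := by
        rw [show r₁.re * t = r₂.re * t + (r₁.re - r₂.re) * t by ring, Real.exp_add]; ring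

theorem norm_sub_mul_mul_norm_le (hy : ContDiffOn ℝ 2 y (Ici 0))
    (hode : ∀ u ∈ Ici (0 : ℝ),
      derivWithin y' (Ici 0) u - (r₁ + r₂) * y' u + r₁ * r₂ * y u = 0)
    (hre : r₂.re ≤ r₁.re) {ρ L : ℝ} (hr₁ : ‖r₁‖ ≤ ρ) (hr₂ : ‖r₂‖ ≤ ρ) (hL : 0 ≤ L)
    (hLρ : L ≤ ρ) {t : ℝ} (ht : 0 ≤ t) :
    ‖r₁ - r₂‖ * (L * ‖y t‖) ≤ 2 * ρ * rexp (r₁.re * t) * (L * ‖y 0‖ + ‖y' 0‖) := by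
  set w₂ := y' 0 - r₂ * y 0
  set w₁ := y' 0 - r₁ * y 0
  have hsplit : ‖(r₁ - r₂) * y t‖ ≤ rexp (r₁.re * t) * (‖w₂‖ + ‖w₁‖) :=
    calc ‖(r₁ - r₂) * y t‖ ≤ ‖cexp (r₁ * t) * w₂‖ + ‖cexp (r₂ * t) * w₁‖ := by
          rw [sub_mul_eq_cexp_sub_cexp hy hode ht]; exact norm_sub_le _ _
      _ = rexp (r₁.re * t) * ‖w₂‖ + rexp (r₂.re * t) * ‖w₁‖ := by
          rw [norm_mul, norm_mul, norm_cexp_mul_ofReal, norm_cexp_mul_ofReal]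
      _ ≤ rexp (r₁.re * t) * (‖w₂‖ + ‖w₁‖) := by rw [mul_add]; gcongr
  calc ‖r₁ - r₂‖ * (L * ‖y t‖) = L * ‖(r₁ - r₂) * y t‖ := by rw [norm_mul]; ring
    _ ≤ L * (rexp (r₁.re * t) * (‖w₂‖ + ‖w₁‖)) := by gcongr
    _ = rexp (r₁.re * t) * (L * ‖w₂‖ + L * ‖w₁‖) := by ring
    _ ≤ rexp (r₁.re * t) * (ρ * (L * ‖y 0‖ + ‖y' 0‖) + ρ * (L * ‖y 0‖ + ‖y' 0‖)) := by
        gcongr ?_ * (?_ + ?_)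
        · exact mul_norm_sub_mul_le hL hLρ hr₂
        · exact mul_norm_sub_mul_le hL hLρ hr₁
    _ = 2 * ρ * rexp (r₁.re * t) * (L * ‖y 0‖ + ‖y' 0‖) := by ring

theorem mul_norm_le_of_re_le (hy : ContDiffOn ℝ 2 y (Ici 0))
    (hode : ∀ u ∈ Ici (0 : ℝ),
      derivWithin y' (Ici 0) u - (r₁ + r₂) * y' u + r₁ * r₂ * y u = 0)
    (hre : r₂.re ≤ r₁.re) {ρ L : ℝ} (hr₂ : ‖r₂‖ ≤ ρ) (hL : 0 ≤ L) (hLρ : L ≤ ρ)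
    {t : ℝ} (ht : 0 ≤ t) :
    L * ‖y t‖ ≤ rexp (r₂.re * t) * (L * ‖y 0‖) +
      ρ * (t * rexp (r₁.re * t)) * (L * ‖y 0‖ + ‖y' 0‖) := by
  have hw := mul_norm_sub_mul_le (a := y 0) (c := y' 0) hL hLρ hr₂
  have hdev := norm_sub_cexp_mul_le hy hode hre ht
  have htri : ‖y t‖ ≤ rexp (r₂.re * t) * ‖y 0‖ + t * rexp (r₁.re * t) * ‖y' 0 - r₂ * y 0‖ := by
    have := norm_le_norm_add_norm_sub' (y t) (cexp (r₂ * t) * y 0)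
    rw [norm_mul, norm_cexp_mul_ofReal] at this
    linarith
  have htexp : 0 ≤ t * rexp (r₁.re * t) := by positivity
  nlinarith [mul_le_mul_of_nonneg_left htri hL, mul_le_mul_of_nonneg_left hw htexp]

theorem mul_norm_le_of_le_norm_sub {b s L : ℝ} (hs : 0 < s) (hb : 0 ≤ b)
    (hy : ContDiffOn ℝ 2 y (Ici 0))
    (hode : ∀ u ∈ Ici (0 : ℝ),
      derivWithin y' (Ici 0) u - (r₁ + r₂) * y' u + r₁ * r₂ * y u = 0)
    (hre : r₂.re ≤ r₁.re) (hα : r₁.re ≤ (-b + s) / 2)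
    (hr₁ : ‖r₁‖ ≤ (b + ‖r₁ - r₂‖) / 2) (hr₂ : ‖r₂‖ ≤ (b + ‖r₁ - r₂‖) / 2)
    (hL : 0 ≤ L) (hLρ : L ≤ (b + ‖r₁ - r₂‖) / 2) (hgap : s / 2 ≤ ‖r₁ - r₂‖)
    {t : ℝ} (ht : 0 ≤ t) :
    L * ‖y t‖ ≤ (1 + 4 * b / s) * rexp ((-b + s) / 2 * t) * (L * ‖y 0‖ + ‖y' 0‖) := by
  set δ := ‖r₁ - r₂‖
  have h := norm_sub_mul_mul_norm_le hy hode hre hr₁ hr₂ hL hLρ ht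
  have hM : b + δ ≤ δ * (1 + 4 * b / s) := by
    have : 2 * b ≤ δ * (4 * b / s) := by
      rw [← mul_div_assoc, le_div_iff₀ hs]; nlinarith
    linarith
  refine le_of_mul_le_mul_left (?_ : δ * _ ≤ δ * _) (by linarith)
  calc δ * (L * ‖y t‖) ≤ 2 * ((b + δ) / 2) * rexp (r₁.re * t) * (L * ‖y 0‖ + ‖y' 0‖) := h
    _ ≤ (b + δ) * rexp ((-b + s) / 2 * t) * (L * ‖y 0‖ + ‖y' 0‖) := by
        rw [mul_div_cancel₀ _ two_ne_zero]; gcongr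
    _ ≤ δ * (1 + 4 * b / s) * rexp ((-b + s) / 2 * t) * (L * ‖y 0‖ + ‖y' 0‖) := by gcongr
    _ = δ * ((1 + 4 * b / s) * rexp ((-b + s) / 2 * t) * (L * ‖y 0‖ + ‖y' 0‖)) := by ring

theorem mul_norm_le_of_re_le_sub {b s L : ℝ} (hs : 0 < s) (hy : ContDiffOn ℝ 2 y (Ici 0))
    (hode : ∀ u ∈ Ici (0 : ℝ),
      derivWithin y' (Ici 0) u - (r₁ + r₂) * y' u + r₁ * r₂ * y u = 0)
    (hre : r₂.re ≤ r₁.re) (hα : r₁.re ≤ (-b + s) / 2 - s / 4) (hr₂ : ‖r₂‖ ≤ b)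
    (hL : 0 ≤ L) (hLb : L ≤ b) {t : ℝ} (ht : 0 ≤ t) :
    L * ‖y t‖ ≤ (1 + 4 * b / s) * rexp ((-b + s) / 2 * t) * (L * ‖y 0‖ + ‖y' 0‖) := by
  set E := rexp ((-b + s) / 2 * t)
  set X := L * ‖y 0‖ + ‖y' 0‖
  have h := mul_norm_le_of_re_le hy hode hre hr₂ hL hLb ht
  have hβ : rexp (r₂.re * t) ≤ E := Real.exp_le_exp.2 (by nlinarith)
  have hte : s / 4 * (t * rexp (r₁.re * t)) ≤ E := by
    have h₁ : rexp (r₁.re * t) ≤ rexp (-(s / 4 * t)) * E := by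
      rw [← Real.exp_add]; exact Real.exp_le_exp.2 (by nlinarith)
    calc s / 4 * (t * rexp (r₁.re * t)) ≤ s / 4 * t * (rexp (-(s / 4 * t)) * E) := by
          rw [← mul_assoc]; gcongr
      _ = s / 4 * t * rexp (-(s / 4 * t)) * E := by ring
      _ ≤ 1 * E := by
          gcongr
          exact (Real.mul_exp_neg_le_exp_neg_one _).trans (by simp)
      _ = E := one_mul E
  calc L * ‖y t‖ ≤ rexp (r₂.re * t) * (L * ‖y 0‖) + b * (t * rexp (r₁.re * t)) * X := h
    _ ≤ E * X + b * (t * rexp (r₁.re * t)) * X := by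
        gcongr
        exact le_add_of_nonneg_right (norm_nonneg _)
    _ = E * X + 4 * b / s * (s / 4 * (t * rexp (r₁.re * t))) * X := by
        field_simp
    _ ≤ E * X + 4 * b / s * E * X := by
        have : 0 ≤ 4 * b / s := div_nonneg (by linarith) hs.le
        gcongr
    _ = (1 + 4 * b / s) * E * X := by ring

end FactoredODE

theorem sqrt_mul_norm_le_of_ode {b m s Λ : ℝ} (hb : 0 ≤ b) (hm : 0 ≤ m) (hs : 0 < s)
    (hs2 : s ^ 2 = b ^ 2 - 4 * m) (hΛ : 0 ≤ Λ) {y : ℝ → ℂ} (hy : ContDiffOn ℝ 2 y (Ici 0))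
    (hode : ∀ u ∈ Ici (0 : ℝ),
      derivWithin (derivWithin y (Ici 0)) (Ici 0) u + (b : ℂ) * derivWithin y (Ici 0) u
        + ((Λ : ℂ) + (m : ℂ)) * y u = 0)
    {t : ℝ} (ht : 0 ≤ t) :
    √Λ * ‖y t‖ ≤ (1 + 4 * b / s) * rexp ((-b + s) / 2 * t) *
      (√Λ * ‖y 0‖ + ‖derivWithin y (Ici 0) 0‖) := by
  obtain ⟨r₁, r₂, hsum, hprod, hre, hαs, hαδ, hr₁, hr₂⟩ :=
    exists_roots_of_sq_sub_le (c := Λ + m) hb hs.le (by nlinarith)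
  push_cast at hprod
  have hode' : ∀ u ∈ Ici (0 : ℝ), derivWithin (derivWithin y (Ici 0)) (Ici 0) u
      - (r₁ + r₂) * derivWithin y (Ici 0) u + r₁ * r₂ * y u = 0 := fun u hu => by
    rw [hsum, hprod]; linear_combination hode u hu
  have hLρ : √Λ ≤ (b + ‖r₁ - r₂‖) / 2 := by
    refine Real.sqrt_le_iff.2 ⟨by positivity, ?_⟩
    have hΛm : Λ + m = ‖r₁‖ * ‖r₂‖ := by
      rw [← norm_mul, hprod, ← Complex.ofReal_add, Complex.norm_real,
        Real.norm_of_nonneg (by positivity)]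
    nlinarith [mul_le_mul hr₁ hr₂ (norm_nonneg _) (hr₁.trans' (norm_nonneg _))]
  rcases le_or_gt (s / 2) ‖r₁ - r₂‖ with hgap | hgap
  · exact mul_norm_le_of_le_norm_sub hs hb hy hode' hre hαs hr₁ hr₂ (Real.sqrt_nonneg Λ) hLρ
      hgap ht
  · have hsb : s ≤ b := by nlinarith
    exact mul_norm_le_of_re_le_sub hs hy hode' hre (by linarith) (by linarith)
      (Real.sqrt_nonneg Λ) (by linarith) ht

/-- Uniform-in-frequency estimate for the homogeneous-Sobolev-weighted quantity: for any
`Λ > 0` and any C² solution `y` of `y'' + b y' + (Λ + m) y = 0` on `[0,∞)`, one has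
`Λ|y(t)|² ≤ C e^{(-b+√(b²-4m))t} (Λ|y(0)|² + |y'(0)|²)` with `C = C(b,m)`. -/
theorem stmt_9 (b m : ℝ) (hb : 0 < b) (hm : 0 ≤ m) (hbm : 4 * m < b ^ 2) :
    ∃ C : ℝ, 0 < C ∧ ∀ Λ : ℝ, 0 < Λ →
      ∀ y : ℝ → ℂ, ContDiffOn ℝ 2 y (Set.Ici 0) →
      (∀ t ∈ Set.Ici (0 : ℝ),
        derivWithin (derivWithin y (Set.Ici 0)) (Set.Ici 0) t
          + (b : ℂ) * derivWithin y (Set.Ici 0) t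
          + ((Λ : ℂ) + (m : ℂ)) * y t = 0) →
      ∀ t : ℝ, 0 < t →
        Λ * ‖y t‖ ^ 2 ≤
          C * Real.exp ((-b + Real.sqrt (b ^ 2 - 4 * m)) * t) *
            (Λ * ‖y 0‖ ^ 2
              + ‖derivWithin y (Set.Ici 0) 0‖ ^ 2) := by
  set s := √(b ^ 2 - 4 * m)
  have hs : 0 < s := Real.sqrt_pos.2 (by linarith)
  have hs2 : s ^ 2 = b ^ 2 - 4 * m := Real.sq_sqrt (by linarith)
  refine ⟨2 * (1 + 4 * b / s) ^ 2, by positivity, fun Λ hΛ y hy hode t ht => ?_⟩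
  have hE : rexp ((-b + s) / 2 * t) ^ 2 = rexp ((-b + s) * t) := by
    rw [← Real.exp_nat_mul]; ring_nf
  calc Λ * ‖y t‖ ^ 2 = (√Λ * ‖y t‖) ^ 2 := by rw [mul_pow, Real.sq_sqrt hΛ.le]
    _ ≤ ((1 + 4 * b / s) * rexp ((-b + s) / 2 * t) *
          (√Λ * ‖y 0‖ + ‖derivWithin y (Ici 0) 0‖)) ^ 2 :=
        pow_le_pow_left₀ (by positivity)
          (sqrt_mul_norm_le_of_ode hb.le hm hs hs2 hΛ.le hy hode ht.le) 2
    _ ≤ ((1 + 4 * b / s) * rexp ((-b + s) / 2 * t)) ^ 2 *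
          (2 * ((√Λ * ‖y 0‖) ^ 2 + ‖derivWithin y (Ici 0) 0‖ ^ 2)) := by
        rw [mul_pow]; gcongr; exact add_sq_le
    _ = 2 * (1 + 4 * b / s) ^ 2 * rexp ((-b + s) * t) *
          (Λ * ‖y 0‖ ^ 2 + ‖derivWithin y (Ici 0) 0‖ ^ 2) := by
        rw [mul_pow, mul_pow, hE, Real.sq_sqrt hΛ.le]; ring
end
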